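/- arXiv:math/0310487 — 5 statements merged into one kernel-verified Lean document; each statement's English description precedes it below -/
import Mathlib

section
/- Let v_1, …, v_s ∈ ℤ^n and suppose there exists u ∈ ℝ^n with ⟨u, v_i⟩ > 0 for all i. Let E be a finite subset of σ∨ ∩ ℤ^n and set Newt = convexHull(E) + σ∨ ⊆ ℝ^n. Let c be a positive rational number, p ≥ 2 an integer, and m ∈ ℤ^n. Then the following are equivalent: (i) there exist an integer e ≥ 1 and μ ∈ ℤ^n such that ⟨μ, v_i⟩ ≤ p^e − 1 for all i and m + p^{−e}·μ ∈ (⌈c·p^e⌉/p^e) • Newt; (ii) there exists w ∈ ℝ^n such that ⟨w, v_i⟩ ≤ 1 for all i and m + w ∈ interior(c • Newt). -/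
open Pointwise
section Aux
variable {n s : ℕ}

def lmap (v : Fin s → Fin n → ℤ) (i : Fin s) : (Fin n → ℝ) →ₗ[ℝ] ℝ where
  toFun x := ∑ j, x j * (v i j : ℝ)
  map_add' x y := by simp [add_mul, Finset.sum_add_distrib]
  map_smul' t x := by simp [Finset.mul_sum]; ring_nf

lemma lmap_apply (v : Fin s → Fin n → ℤ) (i : Fin s) (x : Fin n → ℝ) :
    lmap v i x = ∑ j, x j * (v i j : ℝ) := rfl

lemma S_mem_add (v : Fin s → Fin n → ℤ) {x y : Fin n → ℝ}
    (hx : ∀ i, 0 ≤ ∑ j, x j * (v i j : ℝ)) (hy : ∀ i, 0 ≤ ∑ j, y j * (v i j : ℝ)) :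
    ∀ i, 0 ≤ ∑ j, (x + y) j * (v i j : ℝ) := by
  intro i
  have := map_add (lmap v i) x y
  simp only [lmap_apply] at this
  rw [this]
  exact add_nonneg (hx i) (hy i)

lemma S_mem_smul (v : Fin s → Fin n → ℤ) {x : Fin n → ℝ} {t : ℝ} (ht : 0 ≤ t)
    (hx : ∀ i, 0 ≤ ∑ j, x j * (v i j : ℝ)) :
    ∀ i, 0 ≤ ∑ j, (t • x) j * (v i j : ℝ) := by
  intro i
  have := map_smul (lmap v i) t x
  simp only [lmap_apply, smul_eq_mul] at this
  rw [this]
  exact mul_nonneg ht (hx i)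

lemma Spos_mem_add (v : Fin s → Fin n → ℤ) {x y : Fin n → ℝ}
    (hx : ∀ i, 0 ≤ ∑ j, x j * (v i j : ℝ)) (hy : ∀ i, 0 < ∑ j, y j * (v i j : ℝ)) :
    ∀ i, 0 < ∑ j, (x + y) j * (v i j : ℝ) := by
  intro i
  have := map_add (lmap v i) x y
  simp only [lmap_apply] at this
  rw [this]
  exact add_pos_of_nonneg_of_pos (hx i) (hy i)

lemma Spos_mem_smul (v : Fin s → Fin n → ℤ) {x : Fin n → ℝ} {t : ℝ} (ht : 0 < t)
    (hx : ∀ i, 0 < ∑ j, x j * (v i j : ℝ)) :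
    ∀ i, 0 < ∑ j, (t • x) j * (v i j : ℝ) := by
  intro i
  have := map_smul (lmap v i) t x
  simp only [lmap_apply, smul_eq_mul] at this
  rw [this]
  exact mul_pos ht (hx i)

lemma S_convex (v : Fin s → Fin n → ℤ) :
    Convex ℝ {x : Fin n → ℝ | ∀ i, 0 ≤ ∑ j, x j * (v i j : ℝ)} := by
  have : {x : Fin n → ℝ | ∀ i, 0 ≤ ∑ j, x j * (v i j : ℝ)} = ⋂ i, {x | 0 ≤ lmap v i x} := by
    ext x; simp [lmap]
  rw [this]
  exact convex_iInter fun i => convex_halfSpace_ge (lmap v i).isLinear 0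

lemma Spos_open (v : Fin s → Fin n → ℤ) :
    IsOpen {x : Fin n → ℝ | ∀ i, 0 < ∑ j, x j * (v i j : ℝ)} := by
  have : {x : Fin n → ℝ | ∀ i, 0 < ∑ j, x j * (v i j : ℝ)} = ⋂ i, (lmap v i) ⁻¹' (Set.Ioi 0) := by
    ext x; simp [lmap]
  rw [this]
  exact isOpen_iInter_of_finite fun i =>
    (isOpen_Ioi).preimage ((lmap v i).continuous_of_finiteDimensional)

/-- scaling by `t ≥ 1` maps `H + S` into itself, given `H ⊆ S`. -/
lemma scale_subset (v : Fin s → Fin n → ℤ) (H : Set (Fin n → ℝ))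
    (hHS : H ⊆ {x : Fin n → ℝ | ∀ i, 0 ≤ ∑ j, x j * (v i j : ℝ)}) {t : ℝ} (ht : 1 ≤ t) :
    t • (H + {x : Fin n → ℝ | ∀ i, 0 ≤ ∑ j, x j * (v i j : ℝ)}) ⊆
      H + {x : Fin n → ℝ | ∀ i, 0 ≤ ∑ j, x j * (v i j : ℝ)} := by
  rintro - ⟨x, hx, rfl⟩
  rw [Set.mem_add] at hx
  obtain ⟨h, hh, s0, hs0, rfl⟩ := hx
  rw [Set.mem_add]
  refine ⟨h, hh, (t - 1) • h + t • s0, ?_, by module⟩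
  exact S_mem_add v (S_mem_smul v (by linarith) (hHS hh)) (S_mem_smul v (by linarith) hs0)

/-- `Newt`-point plus strictly positive point is interior. -/
lemma mem_interior_newt (v : Fin s → Fin n → ℤ) (H : Set (Fin n → ℝ))
    {x y : Fin n → ℝ}
    (hx : x ∈ H + {x : Fin n → ℝ | ∀ i, 0 ≤ ∑ j, x j * (v i j : ℝ)})
    (hy : ∀ i, 0 < ∑ j, y j * (v i j : ℝ)) :
    x + y ∈ interior (H + {x : Fin n → ℝ | ∀ i, 0 ≤ ∑ j, x j * (v i j : ℝ)}) := by
  have hopen : IsOpen (H + {x : Fin n → ℝ | ∀ i, 0 < ∑ j, x j * (v i j : ℝ)}) :=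
    (Spos_open v).add_left
  have hsub : H + {x : Fin n → ℝ | ∀ i, 0 < ∑ j, x j * (v i j : ℝ)} ⊆
      H + {x : Fin n → ℝ | ∀ i, 0 ≤ ∑ j, x j * (v i j : ℝ)} :=
    Set.add_subset_add_left (fun z hz i => (hz i).le)
  refine interior_maximal hsub hopen ?_
  rw [Set.mem_add] at hx
  obtain ⟨h, hh, s0, hs0, rfl⟩ := hx
  rw [Set.mem_add]
  exact ⟨h, hh, s0 + y, Spos_mem_add v hs0 hy, by module⟩
end Aux

set_option maxHeartbeats 2000000 in
/-- Let `v 1, …, v s ∈ ℤ^n` and suppose there exists `u ∈ ℝ^n` with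
`⟨u, v i⟩ > 0` for all `i`.  Let `E` be a finite subset of `σ∨ ∩ ℤ^n` and set
`Newt = convexHull E + σ∨ ⊆ ℝ^n`.  Let `c` be a positive rational, `p ≥ 2` an integer and
`m ∈ ℤ^n`.  Then the following are equivalent:
(i) there exist an integer `e ≥ 1` and `μ ∈ ℤ^n` such that `⟨μ, v i⟩ ≤ p^e − 1` for all
`i` and `m + p^{−e} • μ ∈ (⌈c·p^e⌉/p^e) • Newt`;
(ii) there exists `w ∈ ℝ^n` such that `⟨w, v i⟩ ≤ 1` for all `i` and
`m + w ∈ interior (c • Newt)`. -/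
theorem stmt_0 {n s : ℕ} (v : Fin s → Fin n → ℤ)
    (u : Fin n → ℝ) (hu : ∀ i, 0 < ∑ j, u j * (v i j : ℝ))
    (E : Finset (Fin n → ℤ))
    (hE : ∀ e ∈ E, ∀ i, 0 ≤ ∑ j, (e j : ℝ) * (v i j : ℝ))
    (Newt : Set (Fin n → ℝ))
    (hNewt : Newt =
      convexHull ℝ ((fun (m : Fin n → ℤ) (j : Fin n) => (m j : ℝ)) '' (E : Set (Fin n → ℤ))) +
        {x : Fin n → ℝ | ∀ i, 0 ≤ ∑ j, x j * (v i j : ℝ)})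
    (c : ℚ) (hc : 0 < c) (p : ℕ) (hp : 2 ≤ p) (m : Fin n → ℤ) :
    (∃ e : ℕ, 1 ≤ e ∧ ∃ μ : Fin n → ℤ,
        (∀ i, ∑ j, μ j * v i j ≤ (p : ℤ) ^ e - 1) ∧
        (fun j => (m j : ℝ) + ((p : ℝ) ^ e)⁻¹ * (μ j : ℝ)) ∈
          (((⌈c * (p : ℚ) ^ e⌉ : ℤ) : ℝ) / (p : ℝ) ^ e) • Newt) ↔
      (∃ w : Fin n → ℝ, (∀ i, ∑ j, w j * (v i j : ℝ) ≤ 1) ∧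
        (fun j => (m j : ℝ) + w j) ∈ interior ((c : ℝ) • Newt)) := by
  subst hNewt
  set A : Set (Fin n → ℝ) :=
    (fun (m : Fin n → ℤ) (j : Fin n) => (m j : ℝ)) '' (E : Set (Fin n → ℤ)) with hA
  set H : Set (Fin n → ℝ) := convexHull ℝ A with hHdef
  set S : Set (Fin n → ℝ) := {x : Fin n → ℝ | ∀ i, 0 ≤ ∑ j, x j * (v i j : ℝ)} with hSdef
  have hHS : H ⊆ S := by
    rw [hHdef]
    refine convexHull_min ?_ (S_convex v)
    rintro - ⟨e0, he0, rfl⟩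
    intro i
    exact hE e0 he0 i
  have hcR : (0 : ℝ) < (c : ℝ) := by exact_mod_cast hc
  have hp1 : (1 : ℝ) < (p : ℝ) := by
    have : (2 : ℝ) ≤ (p : ℝ) := by exact_mod_cast hp
    linarith
  constructor
  · -- (i) → (ii)
    rintro ⟨e, he, μ, hμ, hmem⟩
    have hP : (0 : ℝ) < (p : ℝ) ^ e := by positivity
    set P : ℝ := (p : ℝ) ^ e with hPdef
    set C'' : ℝ := ((⌈c * (p : ℚ) ^ e⌉ : ℤ) : ℝ) with hC''
    have hceil : (c : ℝ) * P ≤ C'' := by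
      rw [hPdef, hC'']
      exact_mod_cast Int.le_ceil (c * (p : ℚ) ^ e)
    have hc'' : (c : ℝ) ≤ C'' / P := (le_div_iff₀ hP).mpr hceil
    have hincl : (C'' / P) • (H + S) ⊆ (c : ℝ) • (H + S) := by
      have heq : (C'' / P) • (H + S) = (c : ℝ) • ((C'' / P / (c : ℝ)) • (H + S)) := by
        rw [smul_smul]
        congr 1
        field_simp
      rw [heq]
      exact Set.smul_set_mono (scale_subset v H hHS ((one_le_div hcR).mpr hc''))
    obtain ⟨y, hyN, hxy⟩ := Set.mem_smul_set.mp (hincl hmem)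
    rw [Set.mem_add] at hyN
    obtain ⟨h, hh, s0, hs0, hy'⟩ := hyN
    subst hy'
    set M : ℝ := 1 + ∑ i, ∑ j, u j * (v i j : ℝ) with hM
    have hM1 : (1 : ℝ) ≤ M := by
      have : (0 : ℝ) ≤ ∑ i, ∑ j, u j * (v i j : ℝ) :=
        Finset.sum_nonneg fun i _ => (hu i).le
      linarith
    have hMi : ∀ i, ∑ j, u j * (v i j : ℝ) ≤ M := by
      intro i
      have := Finset.single_le_sum (f := fun i => ∑ j, u j * (v i j : ℝ))
        (fun i _ => (hu i).le) (Finset.mem_univ i)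
      linarith
    set δ : ℝ := P⁻¹ / M with hδdef
    have hδ : 0 < δ := by
      apply div_pos (inv_pos.mpr hP); linarith
    refine ⟨fun j => P⁻¹ * (μ j : ℝ) + δ * u j, ?_, ?_⟩
    · intro i
      have hsum : ∑ j, (P⁻¹ * (μ j : ℝ) + δ * u j) * (v i j : ℝ)
          = P⁻¹ * (∑ j, (μ j : ℝ) * (v i j : ℝ)) + δ * ∑ j, u j * (v i j : ℝ) := by
        rw [Finset.mul_sum, Finset.mul_sum, ← Finset.sum_add_distrib]
        exact Finset.sum_congr rfl fun j _ => by ring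
      have hμR : (∑ j, (μ j : ℝ) * (v i j : ℝ)) ≤ P - 1 := by
        have h1 := hμ i
        have h2 : ((∑ j, μ j * v i j : ℤ) : ℝ) ≤ (((p : ℤ) ^ e - 1 : ℤ) : ℝ) := by
          exact_mod_cast h1
        push_cast at h2
        convert h2 using 2
      have hδM : δ * (∑ j, u j * (v i j : ℝ)) ≤ P⁻¹ := by
        have h1 : δ * (∑ j, u j * (v i j : ℝ)) ≤ δ * M :=
          mul_le_mul_of_nonneg_left (hMi i) hδ.le
        have h2 : δ * M = P⁻¹ := by
          rw [hδdef]; field_simp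
        exact le_trans h1 (le_of_eq h2)
      have h3 : P⁻¹ * (∑ j, (μ j : ℝ) * (v i j : ℝ)) ≤ P⁻¹ * (P - 1) :=
        mul_le_mul_of_nonneg_left hμR (inv_nonneg.mpr hP.le)
      have h4 : P⁻¹ * (P - 1) = 1 - P⁻¹ := by
        rw [mul_sub, mul_one, inv_mul_cancel₀ hP.ne']
      rw [hsum]
      linarith
    · rw [interior_smul₀ (ne_of_gt hcR)]
      refine Set.mem_smul_set.mpr ⟨(h + s0) + ((δ / (c : ℝ)) • u), ?_, ?_⟩
      · exact mem_interior_newt v H (Set.mem_add.mpr ⟨h, hh, s0, hs0, rfl⟩)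
          (Spos_mem_smul v (by positivity) hu)
      · funext j
        have hxyj : (c : ℝ) * (h j + s0 j) = (m j : ℝ) + P⁻¹ * (μ j : ℝ) := by
          have := congrFun hxy j
          simpa using this
        have hcu : (c : ℝ) * ((δ / (c : ℝ)) * u j) = δ * u j := by field_simp
        simp only [Pi.add_apply, Pi.smul_apply, smul_eq_mul]
        rw [mul_add, hcu, hxyj]
        ring
  · -- (ii) → (i)
    rintro ⟨w, hw, hmemI⟩
    obtain ⟨r, hr, hball⟩ := Metric.isOpen_iff.mp isOpen_interior _ hmemI
    have hball' : Metric.ball (fun j => (m j : ℝ) + w j) r ⊆ (c : ℝ) • (H + S) :=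
      fun z hz => interior_subset (hball hz)
    obtain ⟨U, hU⟩ : ∃ x : ℝ, x = 1 + ∑ j, |u j| := ⟨_, rfl⟩
    have hU1 : (1 : ℝ) ≤ U := by
      have : (0 : ℝ) ≤ ∑ j, |u j| := Finset.sum_nonneg fun j _ => abs_nonneg _
      rw [hU]; linarith
    have hUj : ∀ j, |u j| ≤ U := by
      intro j
      have := Finset.single_le_sum (f := fun j => |u j|) (fun j _ => abs_nonneg _)
        (Finset.mem_univ j)
      rw [hU]; linarith
    obtain ⟨δ, hδdef⟩ : ∃ x : ℝ, x = r / (2 * U) := ⟨_, rfl⟩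
    have hδ : 0 < δ := by
      rw [hδdef]; apply div_pos hr; linarith
    obtain ⟨w', hw'def⟩ : ∃ x : Fin n → ℝ, x = fun j => w j - δ * u j := ⟨_, rfl⟩
    have hball2 : Metric.ball (fun j => (m j : ℝ) + w' j) (r / 2) ⊆ (c : ℝ) • (H + S) := by
      intro z hz
      apply hball'
      rw [Metric.mem_ball] at hz ⊢
      have hd : dist (fun j => (m j : ℝ) + w' j) (fun j => (m j : ℝ) + w j) ≤ r / 2 := by
        rw [dist_pi_le_iff (by linarith)]
        intro j
        rw [Real.dist_eq]
        have he1 : (m j : ℝ) + w' j - ((m j : ℝ) + w j) = -(δ * u j) := by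
          simp only [hw'def]; ring
        rw [he1, abs_neg, abs_mul, abs_of_pos hδ]
        have h1 : δ * |u j| ≤ δ * U := mul_le_mul_of_nonneg_left (hUj j) hδ.le
        have h2 : δ * U = r / 2 := by
          rw [hδdef]
          field_simp
        linarith
      calc dist z (fun j => (m j : ℝ) + w j)
          ≤ dist z (fun j => (m j : ℝ) + w' j) +
            dist (fun j => (m j : ℝ) + w' j) (fun j => (m j : ℝ) + w j) := dist_triangle _ _ _
        _ < r / 2 + r / 2 := add_lt_add_of_lt_of_le hz hd
        _ = r := by ring
    have hw'sum : ∀ i, ∑ j, w' j * (v i j : ℝ)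
        = (∑ j, w j * (v i j : ℝ)) - δ * ∑ j, u j * (v i j : ℝ) := by
      intro i
      rw [Finset.mul_sum, ← Finset.sum_sub_distrib]
      refine Finset.sum_congr rfl fun j _ => ?_
      simp only [hw'def]; ring
    obtain ⟨K, hK⟩ : ∃ x : ℝ, x = 1 + ∑ j, |(m j : ℝ) + w' j| := ⟨_, rfl⟩
    have hK1 : (1 : ℝ) ≤ K := by
      have : (0 : ℝ) ≤ ∑ j, |(m j : ℝ) + w' j| := Finset.sum_nonneg fun j _ => abs_nonneg _
      rw [hK]; linarith
    have hKj : ∀ j, |(m j : ℝ) + w' j| ≤ K - 1 := by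
      intro j
      have := Finset.single_le_sum (f := fun j => |(m j : ℝ) + w' j|)
        (fun j _ => abs_nonneg _) (Finset.mem_univ j)
      rw [hK]; linarith
    have hQ : (0 : ℝ) < 1 + K / (c : ℝ) := by
      have : 0 < K / (c : ℝ) := div_pos (by linarith) hcR
      linarith
    obtain ⟨R, hR⟩ : ∃ x : ℝ, x = (1 + K / (c : ℝ)) * 2 / r
        + ∑ i, ((∑ j, |(v i j : ℝ)|) + 1) / (δ * ∑ j, u j * (v i j : ℝ)) := ⟨_, rfl⟩
    have htermpos : ∀ i : Fin s,
        0 < ((∑ j, |(v i j : ℝ)|) + 1) / (δ * ∑ j, u j * (v i j : ℝ)) := by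
      intro i
      refine div_pos ?_ (mul_pos hδ (hu i))
      have : (0 : ℝ) ≤ ∑ j, |(v i j : ℝ)| := Finset.sum_nonneg fun j _ => abs_nonneg _
      linarith
    have hR0 : (1 + K / (c : ℝ)) * 2 / r ≤ R := by
      rw [hR]
      have : (0 : ℝ) ≤ ∑ i, ((∑ j, |(v i j : ℝ)|) + 1) / (δ * ∑ j, u j * (v i j : ℝ)) :=
        Finset.sum_nonneg fun i _ => (htermpos i).le
      linarith
    have hRip : ∀ i, ((∑ j, |(v i j : ℝ)|) + 1) / (δ * ∑ j, u j * (v i j : ℝ)) ≤ R := by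
      intro i
      have h1 := Finset.single_le_sum
        (f := fun i => ((∑ j, |(v i j : ℝ)|) + 1) / (δ * ∑ j, u j * (v i j : ℝ)))
        (fun i _ => (htermpos i).le) (Finset.mem_univ i)
      have h2 : (0 : ℝ) < (1 + K / (c : ℝ)) * 2 / r := by
        apply div_pos ?_ hr
        linarith
      rw [hR]
      linarith
    obtain ⟨e0, he0⟩ := pow_unbounded_of_one_lt R hp1
    obtain ⟨e, hedef⟩ : ∃ x : ℕ, x = max e0 1 := ⟨_, rfl⟩
    have he1 : 1 ≤ e := by rw [hedef]; exact le_max_right _ _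
    have hee : e0 ≤ e := by rw [hedef]; exact le_max_left _ _
    have hPe : R < (p : ℝ) ^ e :=
      lt_of_lt_of_le he0 (pow_le_pow_right₀ (le_of_lt hp1) hee)
    have hP : (0 : ℝ) < (p : ℝ) ^ e := by positivity
    have hinv : (0 : ℝ) < ((p : ℝ) ^ e)⁻¹ := inv_pos.mpr hP
    have hPP : ((p : ℝ) ^ e)⁻¹ * (p : ℝ) ^ e = 1 := inv_mul_cancel₀ hP.ne'
    obtain ⟨μ, hμdef⟩ : ∃ x : Fin n → ℤ, x = fun j => ⌊(p : ℝ) ^ e * w' j⌋ := ⟨_, rfl⟩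
    have hμj : ∀ j, (μ j : ℝ) = ((⌊(p : ℝ) ^ e * w' j⌋ : ℤ) : ℝ) := by
      intro j; rw [hμdef]
    -- ceiling facts
    have hceil1 : (c : ℝ) * (p : ℝ) ^ e ≤ ((⌈c * (p : ℚ) ^ e⌉ : ℤ) : ℝ) := by
      exact_mod_cast Int.le_ceil (c * (p : ℚ) ^ e)
    have hceil2 : ((⌈c * (p : ℚ) ^ e⌉ : ℤ) : ℝ) ≤ (c : ℝ) * (p : ℝ) ^ e + 1 := by
      exact_mod_cast (Int.ceil_lt_add_one (c * (p : ℚ) ^ e)).le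
    obtain ⟨c'', hc''def⟩ : ∃ x : ℝ,
        x = ((⌈c * (p : ℚ) ^ e⌉ : ℤ) : ℝ) / (p : ℝ) ^ e := ⟨_, rfl⟩
    have hc''c : (c : ℝ) ≤ c'' := by
      rw [hc''def]; exact (le_div_iff₀ hP).mpr hceil1
    have hc''pos : (0 : ℝ) < c'' := lt_of_lt_of_le hcR hc''c
    have hc''le : c'' - (c : ℝ) ≤ ((p : ℝ) ^ e)⁻¹ := by
      rw [hc''def, sub_le_iff_le_add, div_le_iff₀ hP]
      have hexp : (((p : ℝ) ^ e)⁻¹ + (c : ℝ)) * (p : ℝ) ^ e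
          = 1 + (c : ℝ) * (p : ℝ) ^ e := by
        rw [add_mul, hPP]
      rw [hexp]
      linarith
    obtain ⟨y, hy⟩ : ∃ x : Fin n → ℝ,
        x = fun j => (m j : ℝ) + ((p : ℝ) ^ e)⁻¹ * (μ j : ℝ) := ⟨_, rfl⟩
    have hyb : ∀ j, |y j - ((m j : ℝ) + w' j)| ≤ ((p : ℝ) ^ e)⁻¹ := by
      intro j
      have hfl1 : (⌊(p : ℝ) ^ e * w' j⌋ : ℝ) ≤ (p : ℝ) ^ e * w' j := Int.floor_le _
      have hfl2 : (p : ℝ) ^ e * w' j - 1 < (⌊(p : ℝ) ^ e * w' j⌋ : ℝ) := Int.sub_one_lt_floor _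
      have he2 : y j - ((m j : ℝ) + w' j)
          = ((p : ℝ) ^ e)⁻¹ * (⌊(p : ℝ) ^ e * w' j⌋ : ℝ) - w' j := by
        simp only [hy, hμj]; ring
      have hA1 : ((p : ℝ) ^ e)⁻¹ * (⌊(p : ℝ) ^ e * w' j⌋ : ℝ)
          ≤ ((p : ℝ) ^ e)⁻¹ * ((p : ℝ) ^ e * w' j) := mul_le_mul_of_nonneg_left hfl1 hinv.le
      have hA2 : ((p : ℝ) ^ e)⁻¹ * ((p : ℝ) ^ e * w' j - 1)
          ≤ ((p : ℝ) ^ e)⁻¹ * (⌊(p : ℝ) ^ e * w' j⌋ : ℝ) :=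
        mul_le_mul_of_nonneg_left hfl2.le hinv.le
      have hB1 : ((p : ℝ) ^ e)⁻¹ * ((p : ℝ) ^ e * w' j) = w' j := by
        rw [← mul_assoc, hPP, one_mul]
      have hB2 : ((p : ℝ) ^ e)⁻¹ * ((p : ℝ) ^ e * w' j - 1)
          = w' j - ((p : ℝ) ^ e)⁻¹ := by
        rw [mul_sub, ← mul_assoc, hPP, one_mul, mul_one]
      rw [he2, abs_le]
      constructor <;> linarith [hA1, hA2]
    refine ⟨e, he1, μ, ?_, ?_⟩
    · -- integer inequality
      intro i
      have hRi' : ((∑ j, |(v i j : ℝ)|) + 1)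
          ≤ (p : ℝ) ^ e * (δ * ∑ j, u j * (v i j : ℝ)) := by
        have h5 := lt_of_le_of_lt (hRip i) hPe
        exact le_of_lt ((div_lt_iff₀ (mul_pos hδ (hu i))).mp h5)
      have key : (∑ j, (μ j : ℝ) * (v i j : ℝ)) ≤ (p : ℝ) ^ e - 1 := by
        have hbound : ∀ j, (μ j : ℝ) * (v i j : ℝ)
            ≤ (p : ℝ) ^ e * w' j * (v i j : ℝ) + |(v i j : ℝ)| := by
          intro j
          rw [hμj]
          have h1 : (⌊(p : ℝ) ^ e * w' j⌋ : ℝ) ≤ (p : ℝ) ^ e * w' j := Int.floor_le _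
          have h2 : (p : ℝ) ^ e * w' j - 1 < (⌊(p : ℝ) ^ e * w' j⌋ : ℝ) := Int.sub_one_lt_floor _
          rcases abs_cases ((v i j : ℝ)) with ⟨habs, hsign⟩ | ⟨habs, hsign⟩ <;> nlinarith
        have hsum : (∑ j, (μ j : ℝ) * (v i j : ℝ))
            ≤ ∑ j, ((p : ℝ) ^ e * w' j * (v i j : ℝ) + |(v i j : ℝ)|) :=
          Finset.sum_le_sum fun j _ => hbound j
        have hsplit : ∑ j, ((p : ℝ) ^ e * w' j * (v i j : ℝ) + |(v i j : ℝ)|)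
            = (p : ℝ) ^ e * (∑ j, w' j * (v i j : ℝ)) + ∑ j, |(v i j : ℝ)| := by
          rw [Finset.sum_add_distrib, Finset.mul_sum]
          congr 1
          exact Finset.sum_congr rfl fun j _ => by ring
        have hw'i : ∑ j, w' j * (v i j : ℝ) ≤ 1 - δ * ∑ j, u j * (v i j : ℝ) := by
          rw [hw'sum i]
          have := hw i
          linarith
        have h6 : (p : ℝ) ^ e * (∑ j, w' j * (v i j : ℝ))
            ≤ (p : ℝ) ^ e * (1 - δ * ∑ j, u j * (v i j : ℝ)) :=
          mul_le_mul_of_nonneg_left hw'i hP.le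
        have h7 : (p : ℝ) ^ e * (1 - δ * ∑ j, u j * (v i j : ℝ))
            = (p : ℝ) ^ e - (p : ℝ) ^ e * (δ * ∑ j, u j * (v i j : ℝ)) := by ring
        rw [hsplit] at hsum
        linarith
      have hcast : ((∑ j, μ j * v i j : ℤ) : ℝ) ≤ (((p : ℤ) ^ e - 1 : ℤ) : ℝ) := by
        push_cast
        exact key
      exact_mod_cast hcast
    · -- membership
      have h2' : (1 + K / (c : ℝ)) * 2 < (p : ℝ) ^ e * r := by
        have h5 := lt_of_le_of_lt hR0 hPe
        calc (1 + K / (c : ℝ)) * 2 = (1 + K / (c : ℝ)) * 2 / r * r := by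
              field_simp
          _ < (p : ℝ) ^ e * r := mul_lt_mul_of_pos_right h5 hr
      have hlt : ((p : ℝ) ^ e)⁻¹ * (1 + K / (c : ℝ)) < r / 2 := by
        rw [inv_mul_eq_div, div_lt_iff₀ hP]
        linarith
      -- the rescaled point lies in the small ball
      have hz : (fun j => ((c : ℝ) / c'') * y j)
          ∈ Metric.ball (fun j => (m j : ℝ) + w' j) (r / 2) := by
        rw [Metric.mem_ball]
        have ht0 : 0 < (c : ℝ) / c'' := div_pos hcR hc''pos
        have ht1 : (c : ℝ) / c'' ≤ 1 := (div_le_one hc''pos).mpr hc''c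
        have h1t : 1 - (c : ℝ) / c'' ≤ ((p : ℝ) ^ e)⁻¹ / (c : ℝ) := by
          have e1 : 1 - (c : ℝ) / c'' = (c'' - (c : ℝ)) / c'' := by
            field_simp
          rw [e1]
          exact div_le_div₀ hinv.le hc''le hcR hc''c
        have hcoord : ∀ j, |((c : ℝ) / c'') * y j - ((m j : ℝ) + w' j)|
            ≤ ((p : ℝ) ^ e)⁻¹ * (1 + K / (c : ℝ)) := by
          intro j
          have hb := hKj j
          have ha := hyb j
          have hd1 : ((c : ℝ) / c'') * y j - ((m j : ℝ) + w' j)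
              = ((c : ℝ) / c'') * (y j - ((m j : ℝ) + w' j))
                + (((c : ℝ) / c'') - 1) * ((m j : ℝ) + w' j) := by ring
          calc |((c : ℝ) / c'') * y j - ((m j : ℝ) + w' j)|
              = |((c : ℝ) / c'') * (y j - ((m j : ℝ) + w' j))
                + (((c : ℝ) / c'') - 1) * ((m j : ℝ) + w' j)| := by rw [hd1]
            _ ≤ |((c : ℝ) / c'') * (y j - ((m j : ℝ) + w' j))|
                + |(((c : ℝ) / c'') - 1) * ((m j : ℝ) + w' j)| := abs_add_le _ _
            _ = ((c : ℝ) / c'') * |y j - ((m j : ℝ) + w' j)|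
                + (1 - (c : ℝ) / c'') * |(m j : ℝ) + w' j| := by
                rw [abs_mul, abs_mul, abs_of_pos ht0,
                  abs_of_nonpos (show (c : ℝ) / c'' - 1 ≤ 0 by linarith)]
                ring
            _ ≤ ((p : ℝ) ^ e)⁻¹ * (1 + K / (c : ℝ)) := by
                have hx1 : ((c : ℝ) / c'') * |y j - ((m j : ℝ) + w' j)|
                    ≤ 1 * ((p : ℝ) ^ e)⁻¹ :=
                  mul_le_mul ht1 ha (abs_nonneg _) zero_le_one
                have hx2 : (1 - (c : ℝ) / c'') * |(m j : ℝ) + w' j|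
                    ≤ (((p : ℝ) ^ e)⁻¹ / (c : ℝ)) * (K - 1) :=
                  mul_le_mul h1t hb (abs_nonneg _) (div_nonneg hinv.le hcR.le)
                have hx3 : (0 : ℝ) ≤ ((p : ℝ) ^ e)⁻¹ / (c : ℝ) := div_nonneg hinv.le hcR.le
                have hx4 : (((p : ℝ) ^ e)⁻¹ / (c : ℝ)) * (K - 1)
                    = ((p : ℝ) ^ e)⁻¹ * (K / (c : ℝ)) - ((p : ℝ) ^ e)⁻¹ / (c : ℝ) := by
                  field_simp
                linarith
        have hdle : dist (fun j => ((c : ℝ) / c'') * y j) (fun j => (m j : ℝ) + w' j)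
            ≤ ((p : ℝ) ^ e)⁻¹ * (1 + K / (c : ℝ)) := by
          rw [dist_pi_le_iff (mul_nonneg hinv.le hQ.le)]
          intro j
          rw [Real.dist_eq]
          exact hcoord j
        exact lt_of_le_of_lt hdle hlt
      obtain ⟨q, hq, hqe⟩ := Set.mem_smul_set.mp (hball2 hz)
      rw [← hc''def]
      refine Set.mem_smul_set.mpr ⟨q, hq, ?_⟩
      funext j
      have h1 : (c : ℝ) * q j = ((c : ℝ) / c'') * y j := by
        have := congrFun hqe j
        simpa using this
      have h2 : (c : ℝ) * (c'' * q j) = (c : ℝ) * y j := by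
        have h3 : c'' * ((c : ℝ) * q j) = c'' * (((c : ℝ) / c'') * y j) := by rw [h1]
        have h4 : c'' * (((c : ℝ) / c'') * y j) = (c : ℝ) * y j := by
          field_simp
        rw [h4] at h3
        rw [← h3]; ring
      have h5 : c'' * q j = y j := mul_left_cancel₀ hcR.ne' h2
      show c'' * q j = (m j : ℝ) + ((p : ℝ) ^ e)⁻¹ * (μ j : ℝ)
      rw [h5]
      simp only [hy]
end

section
/- Let σ ⊆ ℝ^n be a convex cone (a set closed under addition and under multiplication by positive real scalars), let C ⊆ ℝ^n be a subset with C + σ ⊆ C, and let u be a point of the topological interior of σ. Then for every x ∈ ℝ^n: x lies in the interior of C if and only if there exists ε > 0 with x − ε·u ∈ C. -/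
open Pointwise

/-- Let `σ ⊆ ℝ^n` be a convex cone (closed under addition and under
multiplication by positive real scalars), let `C ⊆ ℝ^n` satisfy `C + σ ⊆ C`, and let `u` be
a point of the topological interior of `σ`.  Then for every `x ∈ ℝ^n`, `x` lies in the
interior of `C` if and only if there exists `ε > 0` with `x − ε • u ∈ C`. -/
theorem stmt_2 {n : ℕ} (σ C : Set (Fin n → ℝ))
    (hσadd : ∀ x ∈ σ, ∀ y ∈ σ, x + y ∈ σ)
    (hσsmul : ∀ r : ℝ, 0 < r → ∀ x ∈ σ, r • x ∈ σ)
    (hC : C + σ ⊆ C) (u : Fin n → ℝ) (hu : u ∈ interior σ) (x : Fin n → ℝ) :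
    x ∈ interior C ↔ ∃ ε : ℝ, 0 < ε ∧ x - ε • u ∈ C := by
  constructor
  · intro hx
    have cont : Continuous fun ε : ℝ => x - ε • u := by continuity
    have h0 : (fun ε : ℝ => x - ε • u) 0 = x := by simp
    have hev : ∀ᶠ ε in nhds (0 : ℝ), x - ε • u ∈ interior C := by
      have := (cont.tendsto 0).eventually (isOpen_interior.mem_nhds (h0 ▸ hx))
      exact this
    rcases Metric.eventually_nhds_iff.mp hev with ⟨δ, hδ, hball⟩
    refine ⟨δ / 2, by linarith, ?_⟩
    have : x - (δ / 2) • u ∈ interior C := by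
      apply hball
      rw [Real.dist_eq, sub_zero, abs_of_pos (by linarith : (0:ℝ) < δ/2)]
      linarith
    exact interior_subset this
  · rintro ⟨ε, hε, hy⟩
    set y := x - ε • u with hydef
    have hopen : IsOpen ({y} + ε • interior σ) :=
      (isOpen_interior.smul₀ (ne_of_gt hε)).add_left
    have hx' : x = y + ε • u := by
      simp [hydef]
    have hmem : x ∈ {y} + ε • interior σ := by
      rw [hx']
      exact Set.add_mem_add rfl (Set.smul_mem_smul_set hu)
    have hsub : {y} + ε • interior σ ⊆ C := by
      rintro _ ⟨a, ha, b, hb, rfl⟩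
      rcases ha with rfl
      rcases hb with ⟨v, hv, rfl⟩
      exact hC (Set.add_mem_add hy (hσsmul ε hε v (interior_subset hv)))
    exact mem_interior.mpr ⟨_, hsub, hopen, hmem⟩
end

section
/- Let v_1, …, v_s ∈ ℤ^n, let σ∨ = {x ∈ ℝ^n : ⟨x, v_i⟩ ≥ 0 for all i}, and set S = σ∨ ∩ ℤ^n. If E ⊆ ℤ^n satisfies E + S ⊆ E, then convexHull(E) + σ∨ ⊆ convexHull(E); in particular, for every z ∈ convexHull(E) one has z + σ∨ ⊆ convexHull(E). -/
/-!
Let `x ∈ σ∨` and let `M` be the rational matrix of the constraints that are tight at `x`. With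
`M G M = M`, the rational matrix `P = 1 - G M` projects onto `ker M` and fixes `x`. It keeps the
tight constraints at zero and, by continuity, the slack ones positive near `x`, so the images under
`P` of the vertices of a small box around `x` with rational corners are rational points of `σ∨`
whose convex hull contains `P x = x`. A rational point `q` of a cone is a convex combination of `0`
and the lattice point `D q`, `D` a common denominator. Hence `σ∨ ⊆ conv S`, and
`conv E + σ∨ ⊆ conv E + conv S = conv (E + S) ⊆ conv E`.
-/

open Pointwise Matrix

theorem LinearMap.exists_comp_comp_eq_self {K V W : Type*} [DivisionRing K] [AddCommGroup V]
    [Module K V] [AddCommGroup W] [Module K W] (f : V →ₗ[K] W) :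
    ∃ g : W →ₗ[K] V, f ∘ₗ g ∘ₗ f = f := by
  obtain ⟨h, hh⟩ := f.rangeRestrict.exists_rightInverse_of_surjective f.range_rangeRestrict
  obtain ⟨r, hr⟩ := f.range.subtype.exists_leftInverse_of_injective f.range.ker_subtype
  refine ⟨h ∘ₗ r, LinearMap.ext fun x => ?_⟩
  have hr' : r (f x) = f.rangeRestrict x := LinearMap.congr_fun hr (f.rangeRestrict x)
  have hh' := LinearMap.congr_fun hh (f.rangeRestrict x)
  simp only [LinearMap.comp_apply, LinearMap.id_apply] at hh' ⊢
  rw [hr']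
  exact congrArg Subtype.val hh'

theorem Matrix.exists_mul_mul_eq_self {K m n : Type*} [Field K] [Fintype m] [Fintype n]
    [DecidableEq m] [DecidableEq n] (M : Matrix m n K) : ∃ G : Matrix n m K, M * G * M = M := by
  obtain ⟨g, hg⟩ := (toLin' M).exists_comp_comp_eq_self
  refine ⟨LinearMap.toMatrix' g, toLin'.injective ?_⟩
  rwa [toLin'_mul, toLin'_mul, toLin'_toMatrix', LinearMap.comp_assoc]

theorem Matrix.exists_projection_onto_ker_map {K L m n : Type*} [Field K] [CommRing L]
    [Fintype m] [Fintype n] [DecidableEq m] [DecidableEq n] (f : K →+* L) (M : Matrix m n K) :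
    ∃ P : Matrix n n K, M.map f * P.map f = 0 ∧
      ∀ x : n → L, M.map f *ᵥ x = 0 → P.map f *ᵥ x = x := by
  obtain ⟨G, hG⟩ := M.exists_mul_mul_eq_self
  refine ⟨1 - G * M, ?_, fun x hx => ?_⟩
  · rw [← Matrix.map_mul, Matrix.mul_sub, Matrix.mul_one, ← Matrix.mul_assoc, hG, sub_self,
      Matrix.map_zero _ f.map_zero]
  · rw [Matrix.map_sub _ (map_sub f), Matrix.map_one _ f.map_zero f.map_one, Matrix.map_mul,
      sub_mulVec, one_mulVec, ← mulVec_mulVec, hx, mulVec_zero, sub_zero]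

theorem mem_convexHull_pi_pair {ι : Type*} [Finite ι] {a b x : ι → ℝ}
    (hx : ∀ j, x j ∈ Set.Icc (a j) (b j)) :
    x ∈ convexHull ℝ (Set.univ.pi fun j => {a j, b j}) := by
  rw [convexHull_pi]
  intro j _
  change x j ∈ convexHull ℝ {a j, b j}
  rw [convexHull_pair, segment_eq_Icc ((hx j).1.trans (hx j).2)]
  exact hx j

theorem mem_convexHull_ratCast_of_eventually_mulVec_mem {ι : Type*} [Fintype ι]
    {C : Set (ι → ℝ)} {x : ι → ℝ} (P : Matrix ι ι ℚ)
    (hPx : P.map (Rat.castHom ℝ) *ᵥ x = x)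
    (hC : ∀ᶠ y in nhds x, P.map (Rat.castHom ℝ) *ᵥ y ∈ C) :
    x ∈ convexHull ℝ
      ((fun (q : ι → ℚ) j => (q j : ℝ)) '' {q | (fun j => (q j : ℝ)) ∈ C}) := by
  obtain ⟨δ, hδ, hball⟩ := Metric.eventually_nhds_iff.1 hC
  choose a ha using fun j => exists_rat_btwn (show x j - δ < x j by linarith)
  choose b hb using fun j => exists_rat_btwn (show x j < x j + δ by linarith)
  have hx : x ∈ convexHull ℝ (Set.univ.pi fun j => {(a j : ℝ), (b j : ℝ)}) :=
    mem_convexHull_pi_pair fun j => ⟨(ha j).2.le, (hb j).1.le⟩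
  have hvert :
      (P.map (Rat.castHom ℝ)).mulVecLin '' (Set.univ.pi fun j => {(a j : ℝ), (b j : ℝ)}) ⊆
        (fun (q : ι → ℚ) j => (q j : ℝ)) '' {q | (fun j => (q j : ℝ)) ∈ C} := by
    rintro _ ⟨y, hy, rfl⟩
    have hy' : ∀ j, y j = a j ∨ y j = b j := fun j => hy j trivial
    choose r hr using fun j => show ∃ q : ℚ, (q : ℝ) = y j from
      (hy' j).elim (fun h => ⟨a j, h.symm⟩) (fun h => ⟨b j, h.symm⟩)
    have hPy : (fun k => ((P *ᵥ r) k : ℝ)) = P.map (Rat.castHom ℝ) *ᵥ y := by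
      funext k
      rw [show y = fun j => (r j : ℝ) from funext fun j => (hr j).symm]
      exact RingHom.map_mulVec (Rat.castHom ℝ) P r k
    have hdist : dist y x < δ := by
      refine (dist_pi_lt_iff hδ).2 fun j => ?_
      rw [Real.dist_eq, abs_lt]
      rcases hy' j with h | h <;> rw [h] <;> constructor <;> linarith [ha j, hb j]
    exact ⟨P *ᵥ r, by rw [Set.mem_ofPred_eq, hPy]; exact hball hdist, hPy⟩
  rw [← hPx]
  refine convexHull_mono hvert ?_
  rw [← LinearMap.image_convexHull]
  exact Set.mem_image_of_mem _ hx

theorem ratCast_mem_convexHull_intCast {ι : Type*} [Fintype ι] (C : PointedCone ℝ (ι → ℝ))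
    (q : ι → ℚ) (hq : (fun j => (q j : ℝ)) ∈ C) :
    (fun j => (q j : ℝ)) ∈
      convexHull ℝ
        ((fun (m : ι → ℤ) j => (m j : ℝ)) '' {m | (fun j => (m j : ℝ)) ∈ C}) := by
  -- `A.den` is a common denominator of the coordinates of `q`, and `A.num ()` the lattice point.
  obtain ⟨A, hA⟩ : ∃ A : Matrix Unit ι ℚ, ∀ j, A () j = q j :=
    ⟨replicateRow Unit q, fun _ => rfl⟩
  have hq_eq : (fun j => (q j : ℝ)) = (A.den : ℝ)⁻¹ • fun j => (A.num () j : ℝ) := by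
    funext j
    have h := congrFun (congrFun A.inv_denom_smul_num ()) j
    simp only [Matrix.smul_apply, map_apply, smul_eq_mul] at h
    simp only [Pi.smul_apply, smul_eq_mul]
    rw [← hA, ← h]
    push_cast
    rfl
  have hden : (0 : ℝ) < A.den := by exact_mod_cast Nat.pos_of_ne_zero A.den_ne_zero
  have hnum : A.num () ∈ {m : ι → ℤ | (fun j => (m j : ℝ)) ∈ C} := by
    have := PointedCone.smul_mem C hden.le hq
    rwa [hq_eq, smul_inv_smul₀ hden.ne'] at this
  have hzero : (0 : ι → ℤ) ∈ {m : ι → ℤ | (fun j => (m j : ℝ)) ∈ C} := by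
    simp only [Set.mem_ofPred_eq, Pi.zero_apply, Int.cast_zero]
    exact C.zero_mem
  rw [hq_eq]
  refine (convex_convexHull ℝ _).smul_mem_of_zero_mem ?_ ?_ ⟨by positivity, ?_⟩
  · convert subset_convexHull ℝ _ (Set.mem_image_of_mem _ hzero)
    simp
  · exact subset_convexHull ℝ _ (Set.mem_image_of_mem _ hnum)
  · exact inv_le_one_of_one_le₀ (by exact_mod_cast Nat.one_le_iff_ne_zero.mpr A.den_ne_zero)

def dualCone {κ ι : Type*} [Fintype ι] (v : κ → ι → ℤ) :
    PointedCone ℝ (ι → ℝ) where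
  carrier := {x | ∀ i, 0 ≤ ∑ j, x j * (v i j : ℝ)}
  add_mem' hx hy i := by
    simpa only [Pi.add_apply, add_mul, Finset.sum_add_distrib] using add_nonneg (hx i) (hy i)
  zero_mem' i := by simp
  smul_mem' c x hx i := by
    change 0 ≤ ∑ j, (c : ℝ) * x j * (v i j : ℝ)
    simpa only [mul_assoc, ← Finset.mul_sum] using mul_nonneg c.2 (hx i)

theorem exists_ratMatrix_eventually_mulVec_mem_dualCone {κ ι : Type*} [Fintype κ] [Fintype ι]
    (v : κ → ι → ℤ) {x : ι → ℝ} (hx : x ∈ dualCone v) :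
    ∃ P : Matrix ι ι ℚ, P.map (Rat.castHom ℝ) *ᵥ x = x ∧
      ∀ᶠ y in nhds x, P.map (Rat.castHom ℝ) *ᵥ y ∈ dualCone v := by
  classical
  let tight := {i // ∑ j, x j * (v i j : ℝ) = 0}
  let M : Matrix tight ι ℚ := of fun i j => (v i j : ℚ)
  have hM : ∀ (i : tight) (y : ι → ℝ),
      (M.map (Rat.castHom ℝ) *ᵥ y) i = ∑ j, y j * (v i j : ℝ) := by
    intro i y
    simp [M, mulVec, dotProduct, mul_comm]
  obtain ⟨P, hMP, hker⟩ := Matrix.exists_projection_onto_ker_map (Rat.castHom ℝ) M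
  set Q := P.map (Rat.castHom ℝ)
  have hQx : Q *ᵥ x = x := hker x (funext fun i => (hM i x).trans i.2)
  refine ⟨P, hQx, ?_⟩
  have hslack : ∀ i, ∀ᶠ y in nhds x, 0 ≤ ∑ j, (Q *ᵥ y) j * (v i j : ℝ) := by
    intro i
    by_cases hi : ∑ j, x j * (v i j : ℝ) = 0
    · refine Filter.Eventually.of_forall fun y => ?_
      have := congrFun (congrArg (· *ᵥ y) hMP) ⟨i, hi⟩
      simp only [← mulVec_mulVec, zero_mulVec, Pi.zero_apply, hM] at this
      exact this.ge
    · have hcont : Continuous fun y => ∑ j, (Q *ᵥ y) j * (v i j : ℝ) := by fun_prop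
      have hpos : 0 < ∑ j, (Q *ᵥ x) j * (v i j : ℝ) := by rw [hQx]; exact (hx i).lt_of_ne' hi
      exact (continuousAt_const.eventually_lt hcont.continuousAt hpos).mono fun _ => le_of_lt
  exact Filter.eventually_all.2 hslack

theorem dualCone_subset_convexHull_intCast {κ ι : Type*} [Fintype κ] [Fintype ι]
    (v : κ → ι → ℤ) :
    (dualCone v : Set (ι → ℝ)) ⊆ convexHull ℝ
      ((fun (m : ι → ℤ) j => (m j : ℝ)) '' {m | (fun j => (m j : ℝ)) ∈ dualCone v}) := by
  intro x hx
  obtain ⟨P, hPx, hP⟩ := exists_ratMatrix_eventually_mulVec_mem_dualCone v hx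
  refine convexHull_min ?_ (convex_convexHull ℝ _)
    (mem_convexHull_ratCast_of_eventually_mulVec_mem P hPx hP)
  rintro _ ⟨q, hq, rfl⟩
  exact ratCast_mem_convexHull_intCast _ q hq

theorem convexHull_add_subset_of_add_subset {E : Type*} [AddCommGroup E] [Module ℝ E]
    {A B C : Set E} (hAB : A + B ⊆ A) (hC : C ⊆ convexHull ℝ B) :
    convexHull ℝ A + C ⊆ convexHull ℝ A :=
  calc convexHull ℝ A + C ⊆ convexHull ℝ A + convexHull ℝ B := Set.add_subset_add_left hC
    _ = convexHull ℝ (A + B) := (convexHull_add A B).symm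
    _ ⊆ convexHull ℝ A := convexHull_mono hAB

/-- Let `v 1, …, v s ∈ ℤ^n`, let
`σ∨ = {x ∈ ℝ^n : ⟨x, v i⟩ ≥ 0 for all i}`, and set `S = σ∨ ∩ ℤ^n`.  If `E ⊆ ℤ^n`
satisfies `E + S ⊆ E`, then `convexHull E + σ∨ ⊆ convexHull E` (embedding `ℤ^n` in `ℝ^n`);
in particular, for every `z ∈ convexHull E` one has `z + σ∨ ⊆ convexHull E`. -/
theorem stmt_6 {n s : ℕ} (v : Fin s → Fin n → ℤ)
    (E : Set (Fin n → ℤ))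
    (hE : E + {m : Fin n → ℤ | ∀ i, 0 ≤ ∑ j, (m j : ℝ) * (v i j : ℝ)} ⊆ E) :
    (convexHull ℝ ((fun (m : Fin n → ℤ) (j : Fin n) => (m j : ℝ)) '' E) +
        {x : Fin n → ℝ | ∀ i, 0 ≤ ∑ j, x j * (v i j : ℝ)} ⊆
      convexHull ℝ ((fun (m : Fin n → ℤ) (j : Fin n) => (m j : ℝ)) '' E)) ∧
    ∀ z ∈ convexHull ℝ ((fun (m : Fin n → ℤ) (j : Fin n) => (m j : ℝ)) '' E),
      {z} + {x : Fin n → ℝ | ∀ i, 0 ≤ ∑ j, x j * (v i j : ℝ)} ⊆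
        convexHull ℝ ((fun (m : Fin n → ℤ) (j : Fin n) => (m j : ℝ)) '' E) := by
  set toReal := fun (m : Fin n → ℤ) (j : Fin n) => (m j : ℝ)
  have hadd : toReal '' E + toReal '' {m | ∀ i, 0 ≤ ∑ j, (m j : ℝ) * (v i j : ℝ)} ⊆
      toReal '' E := by
    rintro _ ⟨_, ⟨e, he, rfl⟩, _, ⟨m, hm, rfl⟩, rfl⟩
    exact ⟨e + m, hE (Set.add_mem_add he hm), funext fun j => by simp [toReal]⟩
  have hcone := convexHull_add_subset_of_add_subset hadd (dualCone_subset_convexHull_intCast v)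
  exact ⟨hcone, fun z hz =>
    (Set.add_subset_add_right (Set.singleton_subset_iff.2 hz)).trans hcone⟩
end

section
/- Let k be a field, let S be an additive submonoid of ℤ^n, and let R = k[S] be the monoid algebra of S over k (elements are finitely supported functions f : S → k, written f = Σ_m f_m x^m). For t = (t_1, …, t_n) ∈ (kˣ)^n let θ_t : R → R be the map sending f to the element whose coefficient at m is (∏_{i=1}^n t_i^{m_i})·f_m. Then for an ideal I of R the following are equivalent, provided k is infinite: (i) θ_t(f) ∈ I for every t ∈ (kˣ)^n and every f ∈ I; (ii) for every f ∈ I and every m in the support of f, the monomial x^m lies in I (equivalently, I is generated by the monomials it contains). -/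
/-!
If `I` is torus-invariant and `f ∈ I` has distinct monomials `m, m'`, then
`θ_t f - χ_t(m') • f ∈ I`, where `χ_t(m) = ∏ i, t i ^ m i`. Its coefficient at `p` is
`(χ_t(p) - χ_t(m')) * f_p`, so it loses `m'`, and it keeps `m` once `t` separates `m` from `m'`;
such `t` exists because an infinite field has units that are not roots of unity of any given
order. Induction on the size of the support reduces to a single monomial `a x^m ∈ I`.
Conversely, `θ_t f` is a combination of the monomials of `f`.
-/

/-- The action of the torus element `t ∈ (kˣ)^n` on the monoid algebra `k[S]` of a
submonoid `S ⊆ ℤ^n`: it sends `f = Σ_m f_m x^m` to the element whose coefficient at `m`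
is `(∏ i, t i ^ m i) * f_m`. -/
noncomputable def torusAction {n : ℕ} {k : Type*} [Field k] {S : AddSubmonoid (Fin n → ℤ)}
    (t : Fin n → kˣ) (f : AddMonoidAlgebra k S) : AddMonoidAlgebra k S :=
  Finsupp.sum f.coeff fun m a =>
    AddMonoidAlgebra.single m ((((∏ i, t i ^ ((m : Fin n → ℤ) i)) : kˣ) : k) * a)

open AddMonoidAlgebra

def torusCharacter {ι G : Type*} [Fintype ι] [CommGroup G] (t : ι → G) (m : ι → ℤ) : G :=
  ∏ i, t i ^ m i

lemma torusCharacter_mulSingle {ι G : Type*} [Fintype ι] [DecidableEq ι] [CommGroup G]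
    (i : ι) (u : G) (m : ι → ℤ) : torusCharacter (Pi.mulSingle i u) m = u ^ m i := by
  rw [torusCharacter, Finset.prod_eq_single i (fun j _ hj => by simp [hj]) (by simp)]
  simp

lemma exists_zpow_ne_one (K : Type*) [Field K] [Infinite K] {d : ℤ} (hd : d ≠ 0) :
    ∃ u : Kˣ, u ^ d ≠ 1 := by
  classical
  obtain ⟨x, hx⟩ :=
    Infinite.exists_notMem_finset (insert 0 (Polynomial.nthRootsFinset d.natAbs (1 : K)))
  rw [Finset.mem_insert, Polynomial.mem_nthRootsFinset (Int.natAbs_pos.mpr hd), not_or] at hx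
  refine ⟨Units.mk0 x hx.1, fun h => hx.2 ?_⟩
  simpa only [Units.ext_iff, Units.val_pow_eq_pow_val, Units.val_mk0, Units.val_one] using
    pow_natAbs_eq_one.mpr h

lemma exists_torusCharacter_ne {ι K : Type*} [Fintype ι] [Field K] [Infinite K]
    {m m' : ι → ℤ} (h : m ≠ m') :
    ∃ t : ι → Kˣ, torusCharacter t m ≠ torusCharacter t m' := by
  classical
  obtain ⟨i, hi⟩ := Function.ne_iff.mp h
  obtain ⟨u, hu⟩ := exists_zpow_ne_one K (sub_ne_zero.mpr hi)
  rw [zpow_sub, ← div_eq_mul_inv, ne_eq, div_eq_one] at hu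
  exact ⟨Pi.mulSingle i u, by rwa [torusCharacter_mulSingle, torusCharacter_mulSingle]⟩

section MonomialIdeal

variable {k G : Type*} [CommSemiring k] [AddMonoid G] {I : Ideal (AddMonoidAlgebra k G)}

lemma single_mul_mem {m : G} {a : k} (b : k) (h : single m a ∈ I) : single m (b * a) ∈ I := by
  simpa [smul_single'] using I.smul_of_tower_mem b h

lemma single_mem_of_single_one_mem {m : G} (a : k) (h : single m (1 : k) ∈ I) :
    single m a ∈ I := by
  simpa using single_mul_mem a h

lemma single_one_mem_of_single_mem {m : G} {a : k} (ha : IsUnit a) (h : single m a ∈ I) :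
    single m (1 : k) ∈ I := by
  simpa using single_mul_mem (↑ha.unit⁻¹ : k) h

lemma mem_of_forall_single_one_mem {f : AddMonoidAlgebra k G}
    (h : ∀ m ∈ f.coeff.support, single m (1 : k) ∈ I) : f ∈ I := by
  rw [← sum_coeff_single f]
  exact I.sum_mem fun m hm => single_mem_of_single_one_mem _ (h m hm)

end MonomialIdeal

section TorusAction

variable {n : ℕ} {k : Type*} [Field k] {S : AddSubmonoid (Fin n → ℤ)}

lemma torusAction_coeff (t : Fin n → kˣ) (f : AddMonoidAlgebra k S) (m : S) :
    (torusAction t f).coeff m = torusCharacter t m * f.coeff m := by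
  classical
  simp only [torusAction, coeff_finsuppSum, Finsupp.sum_apply, coeff_single, Finsupp.single_apply]
  rw [Finsupp.sum, Finset.sum_ite_eq' f.coeff.support m]
  split_ifs with h
  · rfl
  · rw [Finsupp.notMem_support_iff.mp h, mul_zero]

lemma support_torusAction (t : Fin n → kˣ) (f : AddMonoidAlgebra k S) :
    (torusAction t f).coeff.support = f.coeff.support := by
  ext m
  simp [torusAction_coeff]

end TorusAction

section Invariant

variable {n : ℕ} {k : Type*} [Field k] {S : AddSubmonoid (Fin n → ℤ)}

def IsTorusInvariant (I : Ideal (AddMonoidAlgebra k S)) : Prop :=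
  ∀ t : Fin n → kˣ, ∀ f ∈ I, torusAction t f ∈ I

variable [Infinite k] {I : Ideal (AddMonoidAlgebra k S)}

lemma exists_mem_support_subset_erase (hI : IsTorusInvariant I) {f : AddMonoidAlgebra k S}
    (hf : f ∈ I) {m m' : S} (hm : m ∈ f.coeff.support) (hne : m ≠ m') :
    ∃ g ∈ I, m ∈ g.coeff.support ∧ g.coeff.support ⊆ f.coeff.support.erase m' := by
  obtain ⟨t, ht⟩ := exists_torusCharacter_ne (K := k) (Subtype.coe_injective.ne hne)
  set g := torusAction t f - ((torusCharacter t (m' : Fin n → ℤ) : kˣ) : k) • f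
  have hg (p : S) : g.coeff p = (((torusCharacter t (p : Fin n → ℤ) : kˣ) : k) -
      ((torusCharacter t (m' : Fin n → ℤ) : kˣ) : k)) * f.coeff p := by
    rw [coeff_sub, Finsupp.sub_apply, torusAction_coeff, coeff_smul_apply, smul_eq_mul, sub_mul]
  refine ⟨g, I.sub_mem (hI t f hf) (I.smul_of_tower_mem _ hf), ?_, fun p hp => ?_⟩
  · rw [Finsupp.mem_support_iff, hg]
    exact mul_ne_zero (sub_ne_zero.mpr (Units.val_injective.ne ht))
      (Finsupp.mem_support_iff.mp hm)
  · rw [Finsupp.mem_support_iff, hg] at hp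
    obtain ⟨hp', hfp⟩ := mul_ne_zero_iff.mp hp
    exact Finset.mem_erase.mpr
      ⟨fun h => hp' (by rw [h, sub_self]), Finsupp.mem_support_iff.mpr hfp⟩

theorem single_one_mem_of_isTorusInvariant (hI : IsTorusInvariant I)
    {f : AddMonoidAlgebra k S} (hf : f ∈ I) {m : S} (hm : m ∈ f.coeff.support) :
    single m (1 : k) ∈ I := by
  induction hcard : f.coeff.support.card using Nat.strong_induction_on generalizing f with
  | _ N ih =>
  by_cases hsingle : f.coeff.support ⊆ {m}
  · have hf' : f = single m (f.coeff m) :=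
      coeff_injective (Finsupp.support_subset_singleton.mp hsingle)
    exact single_one_mem_of_single_mem (Finsupp.mem_support_iff.mp hm).isUnit (hf' ▸ hf)
  · obtain ⟨m', hm', hne⟩ := Finset.not_subset.mp hsingle
    obtain ⟨g, hgI, hmg, hgf⟩ :=
      exists_mem_support_subset_erase hI hf hm (Finset.notMem_singleton.mp hne).symm
    exact ih _ (hcard ▸ (Finset.card_le_card hgf).trans_lt (Finset.card_erase_lt_of_mem hm'))
      hgI hmg rfl

end Invariant

/-- Let `k` be an infinite field, `S ⊆ ℤ^n` an additive submonoid and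
`R = k[S]` its monoid algebra over `k`.  For an ideal `I` of `R` the following are
equivalent: (i) `θ_t f ∈ I` for every torus element `t ∈ (kˣ)^n` and every `f ∈ I`;
(ii) for every `f ∈ I` and every `m` in the support of `f`, the monomial `x^m` lies in
`I` (i.e. `I` is generated by the monomials it contains). -/
theorem stmt_10 {n : ℕ} {k : Type*} [Field k] (hk : Infinite k)
    (S : AddSubmonoid (Fin n → ℤ)) (I : Ideal (AddMonoidAlgebra k S)) :
    (∀ t : Fin n → kˣ, ∀ f ∈ I, torusAction t f ∈ I) ↔
      (∀ f ∈ I, ∀ m ∈ f.coeff.support, AddMonoidAlgebra.single m (1 : k) ∈ I) := by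
  refine ⟨fun hI f hf m hm => single_one_mem_of_isTorusInvariant hI hf hm, fun hI t f hf => ?_⟩
  refine mem_of_forall_single_one_mem fun m hm => hI f hf m ?_
  rwa [support_torusAction] at hm
end

section
/- Let k be a field, let E be a nonempty finite subset of ℕ^n, and let 𝔞 be the ideal of the polynomial ring k[x_1, …, x_n] generated by the monomials x^e with e ∈ E. Then for v ∈ ℕ^n the following are equivalent: (i) the monomial x^v is integral over 𝔞, i.e. there exist an integer N ≥ 1 and polynomials a_1, …, a_N with a_i ∈ 𝔞^i for each i and (x^v)^N + a_1·(x^v)^{N−1} + … + a_{N−1}·x^v + a_N = 0; (ii) v ∈ convexHull(⋃_{e ∈ E} (e + ℕ^n)), the convex hull being taken in ℝ^n. -/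
open Pointwise

/-! Both conditions are equivalent to `N • v ∈ N • (E + ℕⁿ)` for some `N ≥ 1`.

Algebraically, `𝔞 ^ N` is the monomial ideal generated by `N • E`. Comparing the coefficients of
`x ^ (N • v)` in an equation of integral dependence shows that some `a i` has `x ^ (i • v)` in its
support, hence `(x ^ v) ^ i ∈ 𝔞 ^ i`; conversely `(x ^ v) ^ N ∈ 𝔞 ^ N` yields the equation
`(x ^ v) ^ N - (x ^ v) ^ N = 0`.

Geometrically, `N • v ∈ N • (E + ℕⁿ)` exhibits `v` as the average of `N` points of `E + ℕⁿ`.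
Conversely, by Carathéodory `v` is a positive convex combination of affinely independent lattice
points; the weights are then the unique solution of a rational linear system, hence rational,
and clearing denominators gives the decomposition. -/

def IsIntegralOverIdeal {R : Type*} [CommRing R] (I : Ideal R) (x : R) : Prop :=
  ∃ N : ℕ, 1 ≤ N ∧ ∃ a : ℕ → R, (∀ i, 1 ≤ i → i ≤ N → a i ∈ I ^ i) ∧
    x ^ N + ∑ i ∈ Finset.Icc 1 N, a i * x ^ (N - i) = 0

theorem IsIntegralOverIdeal.of_pow_mem_pow {R : Type*} [CommRing R] {I : Ideal R} {x : R}
    {N : ℕ} (hN : N ≠ 0) (hx : x ^ N ∈ I ^ N) : IsIntegralOverIdeal I x := by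
  refine ⟨N, Nat.one_le_iff_ne_zero.mpr hN, fun i => if i = N then -x ^ N else 0, ?_, ?_⟩
  · intro i _ _
    dsimp only
    split_ifs with hi
    · subst hi; exact neg_mem hx
    · exact zero_mem _
  · rw [Finset.sum_eq_single_of_mem N (by simp [Nat.one_le_iff_ne_zero, hN])
      (fun i _ hi => by simp [hi])]
    simp

theorem Set.mem_add_univ_iff {M : Type*} [AddCommMonoid M] [PartialOrder M]
    [CanonicallyOrderedAdd M] {s : Set M} {w : M} : w ∈ s + Set.univ ↔ ∃ d ∈ s, d ≤ w := by
  simp [Set.mem_add, le_iff_exists_add, eq_comm]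

theorem AddEquiv.image_nsmul_add_univ {M M' : Type*} [AddCommMonoid M] [AddCommMonoid M']
    (e : M ≃+ M') (s : Set M) (N : ℕ) :
    e '' (N • (s + Set.univ)) = N • (e '' s + Set.univ) := by
  rw [Set.image_nsmul, Set.image_add, Set.image_univ_of_surjective e.surjective]

theorem Set.sum_nsmul_mem_sum_nsmul {M ι : Type*} [AddCommMonoid M] {U : Set M} (t : Finset ι)
    (c : ι → ℕ) {u : ι → M} (hu : ∀ i ∈ t, u i ∈ U) :
    ∑ i ∈ t, c i • u i ∈ (∑ i ∈ t, c i) • U := by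
  induction t using Finset.cons_induction with
  | empty => simp
  | cons i t hi ih =>
    rw [Finset.sum_cons, Finset.sum_cons, add_nsmul]
    exact Set.add_mem_add (Set.nsmul_mem_nsmul (hu i (Finset.mem_cons_self i t)))
      (ih fun j hj => hu j (Finset.mem_cons_of_mem hj))

namespace MvPolynomial

variable {σ R : Type*}

theorem image_monomial_one_add [CommSemiring R] (s t : Set (σ →₀ ℕ)) :
    (fun d => monomial d (1 : R)) '' (s + t) =
      (fun d => monomial d (1 : R)) '' s * (fun d => monomial d (1 : R)) '' t := by
  simp only [← Set.image2_add, ← Set.image2_mul, Set.image2_image_left, Set.image2_image_right,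
    Set.image_image2, monomial_mul, one_mul]

theorem span_monomial_image_pow [CommSemiring R] (s : Set (σ →₀ ℕ)) (N : ℕ) :
    Ideal.span ((fun d => monomial d (1 : R)) '' s) ^ N =
      Ideal.span ((fun d => monomial d (1 : R)) '' (N • s)) := by
  induction N with
  | zero => simp [Ideal.one_eq_top]
  | succ N ih => rw [pow_succ, ih, Ideal.span_mul_span', succ_nsmul, image_monomial_one_add]

theorem monomial_one_mem_span_monomial_image_iff [CommSemiring R] [Nontrivial R]
    {s : Set (σ →₀ ℕ)} {w : σ →₀ ℕ} :
    monomial w (1 : R) ∈ Ideal.span ((fun d => monomial d (1 : R)) '' s) ↔ ∃ d ∈ s, d ≤ w := by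
  classical
  simp [mem_ideal_span_monomial_image, support_monomial]

theorem monomial_one_mem_span_monomial_image_of_mem_support [CommSemiring R] [Nontrivial R]
    {s : Set (σ →₀ ℕ)} {p : MvPolynomial σ R} (hp : p ∈ Ideal.span ((fun d => monomial d 1) '' s))
    {w : σ →₀ ℕ} (hw : w ∈ p.support) :
    monomial w (1 : R) ∈ Ideal.span ((fun d => monomial d (1 : R)) '' s) :=
  monomial_one_mem_span_monomial_image_iff.mpr (mem_ideal_span_monomial_image.mp hp w hw)

theorem coeff_nsmul_mul_monomial_one_pow [CommSemiring R] (p : MvPolynomial σ R)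
    (v : σ →₀ ℕ) {i N : ℕ} (hi : i ≤ N) :
    coeff (N • v) (p * monomial v 1 ^ (N - i)) = coeff (i • v) p := by
  rw [monomial_pow, one_pow, ← Nat.add_sub_cancel' hi, add_nsmul, Nat.add_sub_cancel_left,
    coeff_mul_monomial, mul_one]

theorem exists_pow_mem_pow_of_isIntegralOverIdeal [CommRing R] [Nontrivial R]
    {s : Set (σ →₀ ℕ)} {v : σ →₀ ℕ}
    (h : IsIntegralOverIdeal (Ideal.span ((fun d => monomial d (1 : R)) '' s)) (monomial v 1)) :
    ∃ N ≠ 0, monomial v (1 : R) ^ N ∈ Ideal.span ((fun d => monomial d (1 : R)) '' s) ^ N := by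
  classical
  obtain ⟨N, -, a, ha, heq⟩ := h
  have hcoeff : 1 + ∑ i ∈ Finset.Icc 1 N, coeff (i • v) (a i) = 0 := by
    have := congrArg (coeff (N • v)) heq
    rwa [coeff_add, coeff_sum, monomial_pow, one_pow, coeff_monomial, if_pos rfl,
      Finset.sum_congr rfl fun i hi =>
        coeff_nsmul_mul_monomial_one_pow (a i) v (Finset.mem_Icc.mp hi).2, coeff_zero] at this
  obtain ⟨i, hi, hai⟩ : ∃ i ∈ Finset.Icc 1 N, coeff (i • v) (a i) ≠ 0 := by
    by_contra! hall
    simp [Finset.sum_eq_zero hall] at hcoeff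
  obtain ⟨hi1, hiN⟩ := Finset.mem_Icc.mp hi
  refine ⟨i, Nat.one_le_iff_ne_zero.mp hi1, ?_⟩
  have hai_mem := ha i hi1 hiN
  rw [span_monomial_image_pow] at hai_mem ⊢
  rw [monomial_pow, one_pow]
  exact monomial_one_mem_span_monomial_image_of_mem_support hai_mem (mem_support_iff.mpr hai)

theorem isIntegralOverIdeal_monomial_iff [CommRing R] [Nontrivial R]
    {s : Set (σ →₀ ℕ)} {v : σ →₀ ℕ} :
    IsIntegralOverIdeal (Ideal.span ((fun d => monomial d (1 : R)) '' s)) (monomial v 1) ↔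
      ∃ N ≠ 0, N • v ∈ N • (s + Set.univ) := by
  have hpow : ∀ N ≠ 0, monomial v (1 : R) ^ N ∈ Ideal.span ((fun d => monomial d 1) '' s) ^ N ↔
      N • v ∈ N • (s + Set.univ) := fun N hN => by
    rw [monomial_pow, one_pow, span_monomial_image_pow, monomial_one_mem_span_monomial_image_iff,
      nsmul_add, Set.nsmul_univ hN, Set.mem_add_univ_iff]
  constructor
  · intro h
    obtain ⟨N, hN, hmem⟩ := exists_pow_mem_pow_of_isIntegralOverIdeal h
    exact ⟨N, hN, (hpow N hN).mp hmem⟩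
  · rintro ⟨N, hN, h⟩
    exact .of_pow_mem_pow hN ((hpow N hN).mpr h)

end MvPolynomial

section RationalWeights

open Matrix

theorem Matrix.exists_comp_eq_of_injective_mulVec {K L m ι : Type*} [Field K] [Field L]
    [Fintype m] [Fintype ι] (f : K →+* L) (A : Matrix m ι K)
    (hA : Function.Injective (A.map f).mulVec) {w : ι → L} {b : m → K}
    (hw : A.map f *ᵥ w = f ∘ b) : ∃ q : ι → K, f ∘ q = w := by
  classical
  have hker : LinearMap.ker A.mulVecLin = ⊥ := by
    refine LinearMap.ker_eq_bot'.mpr fun x hx => funext fun i => f.injective ?_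
    have : A.map f *ᵥ (f ∘ x) = A.map f *ᵥ 0 := by
      ext r
      simp [← RingHom.map_mulVec, show A *ᵥ x = 0 from hx]
    simpa using congrFun (hA this) i
  obtain ⟨g, hg⟩ := A.mulVecLin.exists_leftInverse_of_injective hker
  have hBA : LinearMap.toMatrix' g * A = 1 := by
    have hA' : LinearMap.toMatrix' A.mulVecLin = A := LinearMap.toMatrix'_toLin' A
    simpa [LinearMap.toMatrix'_comp, hA'] using congrArg LinearMap.toMatrix' hg
  refine ⟨LinearMap.toMatrix' g *ᵥ b, ?_⟩
  calc f ∘ (LinearMap.toMatrix' g *ᵥ b) = (LinearMap.toMatrix' g).map f *ᵥ (f ∘ b) := by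
        ext i; exact RingHom.map_mulVec f _ b i
    _ = (LinearMap.toMatrix' g * A).map f *ᵥ w := by
        rw [← hw, Matrix.map_mul, Matrix.mulVec_mulVec]
    _ = w := by rw [hBA, Matrix.map_one _ f.map_zero f.map_one, Matrix.one_mulVec]

theorem AffineIndependent.exists_rat_weights {σ ι : Type*} [Fintype σ] [Fintype ι]
    {p : ι → σ → ℚ} (hp : AffineIndependent ℝ fun i j => (p i j : ℝ)) {w : ι → ℝ}
    (hw : ∑ i, w i = 1) {v : σ → ℚ}
    (hv : ∑ i, w i • (fun j => (p i j : ℝ)) = fun j => (v j : ℝ)) :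
    ∃ q : ι → ℚ, ∀ i, (q i : ℝ) = w i := by
  -- `w` solves the rational system `∑ w = 1, ∑ w • p = v`, uniquely by affine independence
  let A : Matrix (Option σ) ι ℚ := Matrix.of fun r i => r.elim 1 (p i)
  have hA : ∀ c : ι → ℝ, A.map (Rat.castHom ℝ) *ᵥ c =
      fun r => r.elim (∑ i, c i) fun j => ∑ i, c i * p i j := by
    intro c
    ext (_ | j) <;> simp [A, Matrix.mulVec, dotProduct, mul_comm]
  have hinj : Function.Injective (A.map (Rat.castHom ℝ)).mulVec := by
    intro x y hxy
    rw [hA, hA] at hxy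
    have hsum : ∑ i, (x - y) i = 0 := by simpa [sub_eq_zero] using congrFun hxy none
    have := (affineIndependent_iff_of_fintype ℝ _).mp hp (x - y) hsum ?_
    · exact funext fun i => sub_eq_zero.mp (this i)
    · rw [Finset.weightedVSub_eq_linear_combination _ hsum]
      ext j
      simpa [Finset.sum_apply, sub_mul, sub_eq_zero, mul_comm] using congrFun hxy (some j)
  obtain ⟨q, hq⟩ := Matrix.exists_comp_eq_of_injective_mulVec (Rat.castHom ℝ) A hinj
    (w := w) (b := fun r => r.elim 1 v) (by
      rw [hA]
      ext (_ | j)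
      · simp [hw]
      · simpa [Finset.sum_apply, mul_comm] using congrFun hv j)
  exact ⟨q, fun i => congrFun hq i⟩

end RationalWeights

theorem Rat.exists_common_denominator_of_nonneg {ι : Type*} [Fintype ι] {q : ι → ℚ}
    (hq : ∀ i, 0 ≤ q i) : ∃ N : ℕ, N ≠ 0 ∧ ∃ c : ι → ℕ, ∀ i, (c i : ℚ) = N * q i := by
  refine ⟨∏ i, (q i).den, Finset.prod_ne_zero_iff.mpr fun i _ => (q i).den_ne_zero,
    fun i => (∏ j, (q j).den) / (q i).den * (q i).num.toNat, fun i => ?_⟩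
  have hdvd : (q i).den ∣ ∏ j, (q j).den := Finset.dvd_prod_of_mem _ (Finset.mem_univ i)
  have hnum : ((q i).num.toNat : ℚ) = (q i).num := by
    exact_mod_cast Int.toNat_of_nonneg (Rat.num_nonneg.mpr (hq i))
  rw [Nat.cast_mul, Nat.cast_div hdvd (by simp), hnum]
  nth_rewrite 3 [← Rat.num_div_den (q i)]
  ring

section LatticeConvexHull

variable {σ : Type*} {U : Set (σ → ℕ)} {v : σ → ℕ}

theorem natCast_mem_convexHull_of_nsmul_mem_nsmul {N : ℕ} (hN : N ≠ 0) (h : N • v ∈ N • U) :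
    (fun j => (v j : ℝ)) ∈ convexHull ℝ ((fun u j => (u j : ℝ)) '' U) := by
  obtain ⟨u, hu⟩ := Set.mem_nsmul.mp h
  rw [List.sum_ofFn] at hu
  have hmem := Finset.univ.centerMass_mem_convexHull (w := fun _ => (1 : ℝ))
    (z := fun i j => ((u i : σ → ℕ) j : ℝ)) (fun _ _ => zero_le_one)
    (by simp [Nat.pos_of_ne_zero hN])
    (fun i _ => Set.mem_image_of_mem (fun u j => (u j : ℝ)) (u i).2)
  convert hmem using 1
  ext j
  have hj := congrFun hu j
  simp only [Finset.sum_apply, Pi.smul_apply, smul_eq_mul] at hj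
  have hN' : (N : ℝ) ≠ 0 := Nat.cast_ne_zero.mpr hN
  simp only [Finset.centerMass, Finset.sum_const, Finset.card_univ, Fintype.card_fin,
    nsmul_eq_mul, mul_one, one_smul, Pi.smul_apply, Finset.sum_apply, smul_eq_mul]
  rw [← Nat.cast_sum, hj, Nat.cast_mul, inv_mul_cancel_left₀ hN']

theorem exists_nsmul_mem_nsmul_of_natCast_mem_convexHull [Fintype σ]
    (h : (fun j => (v j : ℝ)) ∈ convexHull ℝ ((fun u j => (u j : ℝ)) '' U)) :
    ∃ N ≠ 0, N • v ∈ N • U := by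
  obtain ⟨ι, _, z, w, hzU, hz, hw0, hw1, hwv⟩ := eq_pos_convex_span_of_mem_convexHull h
  choose u hu hzu using fun i => hzU (Set.mem_range_self i)
  obtain rfl : z = fun i j => (u i j : ℝ) := funext fun i => (hzu i).symm
  obtain ⟨q, hq⟩ := AffineIndependent.exists_rat_weights (p := fun i j => (u i j : ℚ))
    (by simpa using hz) hw1 (v := fun j => (v j : ℚ)) (by simpa using hwv)
  obtain ⟨N, hN, c, hc⟩ := Rat.exists_common_denominator_of_nonneg fun i =>
    (Rat.cast_nonneg (K := ℝ)).mp ((hq i).symm ▸ (hw0 i).le)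
  have hcw : ∀ i, (c i : ℝ) = N * w i := fun i => by
    rw [← hq i]; exact_mod_cast hc i
  have hcN : ∑ i, c i = N := by
    have : ∑ i, (c i : ℝ) = N := by simp [hcw, ← Finset.mul_sum, hw1]
    exact_mod_cast this
  have hcv : ∑ i, c i • u i = N • v := by
    ext j
    have hj := congrFun hwv j
    simp only [Finset.sum_apply, Pi.smul_apply, smul_eq_mul] at hj
    have : ∑ i, (c i : ℝ) * u i j = N * v j := by
      simp [hcw, mul_assoc, ← Finset.mul_sum, hj]
    simpa [Finset.sum_apply] using (by exact_mod_cast this : ∑ i, c i * u i j = N * v j)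
  refine ⟨N, hN, ?_⟩
  rw [← hcv, ← hcN]
  exact Set.sum_nsmul_mem_sum_nsmul _ c fun i _ => hu i

theorem natCast_mem_convexHull_iff [Fintype σ] :
    (fun j => (v j : ℝ)) ∈ convexHull ℝ ((fun u j => (u j : ℝ)) '' U) ↔
      ∃ N ≠ 0, N • v ∈ N • U :=
  ⟨exists_nsmul_mem_nsmul_of_natCast_mem_convexHull,
    fun ⟨_, hN, h⟩ => natCast_mem_convexHull_of_nsmul_mem_nsmul hN h⟩

theorem iUnion_add_natCast_eq (E : Set (σ → ℕ)) :
    ⋃ e ∈ E, {x : σ → ℝ | ∃ m : σ → ℕ, x = fun j => (e j : ℝ) + (m j : ℝ)} =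
      (fun u j => (u j : ℝ)) '' (E + Set.univ) := by
  ext x
  simp only [Set.mem_iUnion, Set.mem_ofPred_eq, Set.mem_image, Set.mem_add, Set.mem_univ,
    true_and, exists_prop]
  constructor
  · rintro ⟨e, he, m, rfl⟩
    exact ⟨e + m, ⟨e, he, m, rfl⟩, by simp⟩
  · rintro ⟨_, ⟨e, he, m, rfl⟩, rfl⟩
    exact ⟨e, he, m, by simp⟩

end LatticeConvexHull

theorem stmt_12_general {n : ℕ} {k : Type*} [Field k]
    (E : Finset (Fin n → ℕ))
    (𝔞 : Ideal (MvPolynomial (Fin n) k))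
    (h𝔞 : 𝔞 = Ideal.span ((fun e : Fin n → ℕ => MvPolynomial.monomial
      (Finsupp.equivFunOnFinite.symm e) (1 : k)) '' (E : Set (Fin n → ℕ))))
    (v : Fin n → ℕ) :
    (∃ N : ℕ, 1 ≤ N ∧ ∃ a : ℕ → MvPolynomial (Fin n) k,
        (∀ i, 1 ≤ i → i ≤ N → a i ∈ 𝔞 ^ i) ∧
        (MvPolynomial.monomial (Finsupp.equivFunOnFinite.symm v) (1 : k)) ^ N +
          ∑ i ∈ Finset.Icc 1 N,
            a i * (MvPolynomial.monomial (Finsupp.equivFunOnFinite.symm v) (1 : k)) ^ (N - i)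
          = 0) ↔
      (fun j => (v j : ℝ)) ∈ convexHull ℝ
        (⋃ e ∈ E, {x : Fin n → ℝ | ∃ m : Fin n → ℕ, x = fun j => (e j : ℝ) + (m j : ℝ)}) := by
  subst h𝔞
  let e : (Fin n → ℕ) ≃+ (Fin n →₀ ℕ) := Finsupp.addEquivFunOnFinite.symm
  have hgens : (fun u : Fin n → ℕ => MvPolynomial.monomial (e u) (1 : k)) '' E =
      (fun d => MvPolynomial.monomial d 1) '' (e '' E) := by rw [Set.image_image]
  change IsIntegralOverIdeal (Ideal.span ((fun u => MvPolynomial.monomial (e u) 1) '' E))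
    (MvPolynomial.monomial (e v) 1) ↔ _
  rw [hgens, MvPolynomial.isIntegralOverIdeal_monomial_iff, ← Finset.set_biUnion_coe,
    iUnion_add_natCast_eq, natCast_mem_convexHull_iff]
  simp_rw [← e.image_nsmul_add_univ, ← map_nsmul, e.injective.mem_set_image]

/-- Let `k` be a field, `E` a nonempty finite subset of `ℕ^n`, and `𝔞`
the ideal of `k[x_1, …, x_n]` generated by the monomials `x^e`, `e ∈ E`.  Then for
`v ∈ ℕ^n` the following are equivalent:
(i) the monomial `x^v` is integral over `𝔞`, i.e. there exist `N ≥ 1` and polynomials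
`a_1, …, a_N` with `a_i ∈ 𝔞^i` and `(x^v)^N + Σ_{i=1}^N a_i (x^v)^{N−i} = 0`;
(ii) `v ∈ convexHull (⋃_{e ∈ E} (e + ℕ^n))`, the convex hull taken in `ℝ^n`. -/
theorem stmt_12 {n : ℕ} {k : Type*} [Field k]
    (E : Finset (Fin n → ℕ)) (hEne : E.Nonempty)
    (𝔞 : Ideal (MvPolynomial (Fin n) k))
    (h𝔞 : 𝔞 = Ideal.span ((fun e : Fin n → ℕ => MvPolynomial.monomial
      (Finsupp.equivFunOnFinite.symm e) (1 : k)) '' (E : Set (Fin n → ℕ))))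
    (v : Fin n → ℕ) :
    (∃ N : ℕ, 1 ≤ N ∧ ∃ a : ℕ → MvPolynomial (Fin n) k,
        (∀ i, 1 ≤ i → i ≤ N → a i ∈ 𝔞 ^ i) ∧
        (MvPolynomial.monomial (Finsupp.equivFunOnFinite.symm v) (1 : k)) ^ N +
          ∑ i ∈ Finset.Icc 1 N,
            a i * (MvPolynomial.monomial (Finsupp.equivFunOnFinite.symm v) (1 : k)) ^ (N - i)
          = 0) ↔
      (fun j => (v j : ℝ)) ∈ convexHull ℝ
        (⋃ e ∈ E, {x : Fin n → ℝ | ∃ m : Fin n → ℕ, x = fun j => (e j : ℝ) + (m j : ℝ)}) :=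
  stmt_12_general E 𝔞 h𝔞 v
end
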